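/- The 4-form *φ₀ is a calibration on Euclidean ℝ⁷: for every orthonormal quadruple of vectors v₁, v₂, v₃, v₄ ∈ ℝ⁷ one has *φ₀(v₁, v₂, v₃, v₄) ≤ 1 (equivalently |*φ₀(v₁,v₂,v₃,v₄)| ≤ 1), with equality *φ₀ = 1 attained for some orthonormal quadruple, e.g. the last four standard basis vectors. -/

import Mathlib

open scoped RealInnerProductSpace

noncomputable section

/-- ℝ⁷ with its standard Euclidean inner product. -/
abbrev E7 := EuclideanSpace ℝ (Fin 7)

/-- The coordinate 3-form dx_i ∧ dx_j ∧ dx_k on ℝ⁷ (indices 0,…,6 for x₁,…,x₇). -/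
def tri7 (i j k : Fin 7) (u v w : E7) : ℝ :=
  Matrix.det !![u i, u j, u k; v i, v j, v k; w i, w j, w k]

/-- The G₂ 3-form φ₀ = dx₁₂₃ + dx₁₄₅ + dx₁₆₇ + dx₂₄₆ − dx₂₅₇ − dx₃₄₇ − dx₃₅₆. -/
def phi0 (u v w : E7) : ℝ :=
  tri7 0 1 2 u v w + tri7 0 3 4 u v w + tri7 0 5 6 u v w + tri7 1 3 5 u v w
    - tri7 1 4 6 u v w - tri7 2 3 6 u v w - tri7 2 4 5 u v w

/-- The coordinate 4-form dx_i ∧ dx_j ∧ dx_k ∧ dx_l on ℝ⁷. -/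
def quad7 (i j k l : Fin 7) (a b c d : E7) : ℝ :=
  Matrix.det !![a i, a j, a k, a l; b i, b j, b k, b l;
                c i, c j, c k, c l; d i, d j, d k, d l]

/-- The 4-form *φ₀ = dx₄₅₆₇ + dx₂₃₆₇ + dx₂₃₄₅ + dx₁₃₅₇ − dx₁₃₄₆ − dx₁₂₅₆ − dx₁₂₄₇. -/
def starphi0 (a b c d : E7) : ℝ :=
  quad7 3 4 5 6 a b c d + quad7 1 2 5 6 a b c d + quad7 1 2 3 4 a b c d
    + quad7 0 2 4 6 a b c d - quad7 0 2 3 5 a b c d - quad7 0 1 4 5 a b c d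
    - quad7 0 1 3 6 a b c d



lemma tri7_expand (i j k : Fin 7) (u v w : E7) : tri7 i j k u v w = u i * v j * w k - u i * v k * w j - u j * v i * w k + u j * v k * w i + u k * v i * w j - u k * v j * w i := by
  simp [tri7, Matrix.det_fin_three]

set_option maxHeartbeats 1000000 in
lemma quad7_expand (i j k l : Fin 7) (a b c d : E7) : quad7 i j k l a b c d = a i * b j * c k * d l - a i * b j * c l * d k - a i * b k * c j * d l + a i * b k * c l * d j + a i * b l * c j * d k - a i * b l * c k * d j - a j * b i * c k * d l + a j * b i * c l * d k + a j * b k * c i * d l - a j * b k * c l * d i - a j * b l * c i * d k + a j * b l * c k * d i + a k * b i * c j * d l - a k * b i * c l * d j - a k * b j * c i * d l + a k * b j * c l * d i + a k * b l * c i * d j - a k * b l * c j * d i - a l * b i * c j * d k + a l * b i * c k * d j + a l * b j * c i * d k - a l * b j * c k * d i - a l * b k * c i * d j + a l * b k * c j * d i := by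
  simp (config := { decide := true }) [quad7, Matrix.det_succ_row_zero, Fin.sum_univ_succ, Fin.succAbove, show (Fin.castSucc 2 : Fin 4) = 2 from rfl, show ((1:Fin 3).succ : Fin 4) = 2 from rfl]; ring

def X0 (b c d : E7) : ℝ :=
  -b 1 * c 3 * d 6 - b 1 * c 4 * d 5 + b 1 * c 5 * d 4 + b 1 * c 6 * d 3 - b 2 * c 3 * d 5 + b 2 * c 4 * d 6 + b 2 * c 5 * d 3 - b 2 * c 6 * d 4 + b 3 * c 1 * d 6 + b 3 * c 2 * d 5 - b 3 * c 5 * d 2 - b 3 * c 6 * d 1 + b 4 * c 1 * d 5 - b 4 * c 2 * d 6 - b 4 * c 5 * d 1 + b 4 * c 6 * d 2 - b 5 * c 1 * d 4 - b 5 * c 2 * d 3 + b 5 * c 3 * d 2 + b 5 * c 4 * d 1 - b 6 * c 1 * d 3 + b 6 * c 2 * d 4 + b 6 * c 3 * d 1 - b 6 * c 4 * d 2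

def X1 (b c d : E7) : ℝ :=
  b 0 * c 3 * d 6 + b 0 * c 4 * d 5 - b 0 * c 5 * d 4 - b 0 * c 6 * d 3 + b 2 * c 3 * d 4 - b 2 * c 4 * d 3 + b 2 * c 5 * d 6 - b 2 * c 6 * d 5 - b 3 * c 0 * d 6 - b 3 * c 2 * d 4 + b 3 * c 4 * d 2 + b 3 * c 6 * d 0 - b 4 * c 0 * d 5 + b 4 * c 2 * d 3 - b 4 * c 3 * d 2 + b 4 * c 5 * d 0 + b 5 * c 0 * d 4 - b 5 * c 2 * d 6 - b 5 * c 4 * d 0 + b 5 * c 6 * d 2 + b 6 * c 0 * d 3 + b 6 * c 2 * d 5 - b 6 * c 3 * d 0 - b 6 * c 5 * d 2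

def X2 (b c d : E7) : ℝ :=
  b 0 * c 3 * d 5 - b 0 * c 4 * d 6 - b 0 * c 5 * d 3 + b 0 * c 6 * d 4 - b 1 * c 3 * d 4 + b 1 * c 4 * d 3 - b 1 * c 5 * d 6 + b 1 * c 6 * d 5 - b 3 * c 0 * d 5 + b 3 * c 1 * d 4 - b 3 * c 4 * d 1 + b 3 * c 5 * d 0 + b 4 * c 0 * d 6 - b 4 * c 1 * d 3 + b 4 * c 3 * d 1 - b 4 * c 6 * d 0 + b 5 * c 0 * d 3 + b 5 * c 1 * d 6 - b 5 * c 3 * d 0 - b 5 * c 6 * d 1 - b 6 * c 0 * d 4 - b 6 * c 1 * d 5 + b 6 * c 4 * d 0 + b 6 * c 5 * d 1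

def X3 (b c d : E7) : ℝ :=
  -b 0 * c 1 * d 6 - b 0 * c 2 * d 5 + b 0 * c 5 * d 2 + b 0 * c 6 * d 1 + b 1 * c 0 * d 6 + b 1 * c 2 * d 4 - b 1 * c 4 * d 2 - b 1 * c 6 * d 0 + b 2 * c 0 * d 5 - b 2 * c 1 * d 4 + b 2 * c 4 * d 1 - b 2 * c 5 * d 0 + b 4 * c 1 * d 2 - b 4 * c 2 * d 1 + b 4 * c 5 * d 6 - b 4 * c 6 * d 5 - b 5 * c 0 * d 2 + b 5 * c 2 * d 0 - b 5 * c 4 * d 6 + b 5 * c 6 * d 4 - b 6 * c 0 * d 1 + b 6 * c 1 * d 0 + b 6 * c 4 * d 5 - b 6 * c 5 * d 4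

def X4 (b c d : E7) : ℝ :=
  -b 0 * c 1 * d 5 + b 0 * c 2 * d 6 + b 0 * c 5 * d 1 - b 0 * c 6 * d 2 + b 1 * c 0 * d 5 - b 1 * c 2 * d 3 + b 1 * c 3 * d 2 - b 1 * c 5 * d 0 - b 2 * c 0 * d 6 + b 2 * c 1 * d 3 - b 2 * c 3 * d 1 + b 2 * c 6 * d 0 - b 3 * c 1 * d 2 + b 3 * c 2 * d 1 - b 3 * c 5 * d 6 + b 3 * c 6 * d 5 - b 5 * c 0 * d 1 + b 5 * c 1 * d 0 + b 5 * c 3 * d 6 - b 5 * c 6 * d 3 + b 6 * c 0 * d 2 - b 6 * c 2 * d 0 - b 6 * c 3 * d 5 + b 6 * c 5 * d 3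

def X5 (b c d : E7) : ℝ :=
  b 0 * c 1 * d 4 + b 0 * c 2 * d 3 - b 0 * c 3 * d 2 - b 0 * c 4 * d 1 - b 1 * c 0 * d 4 + b 1 * c 2 * d 6 + b 1 * c 4 * d 0 - b 1 * c 6 * d 2 - b 2 * c 0 * d 3 - b 2 * c 1 * d 6 + b 2 * c 3 * d 0 + b 2 * c 6 * d 1 + b 3 * c 0 * d 2 - b 3 * c 2 * d 0 + b 3 * c 4 * d 6 - b 3 * c 6 * d 4 + b 4 * c 0 * d 1 - b 4 * c 1 * d 0 - b 4 * c 3 * d 6 + b 4 * c 6 * d 3 + b 6 * c 1 * d 2 - b 6 * c 2 * d 1 + b 6 * c 3 * d 4 - b 6 * c 4 * d 3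

def X6 (b c d : E7) : ℝ :=
  b 0 * c 1 * d 3 - b 0 * c 2 * d 4 - b 0 * c 3 * d 1 + b 0 * c 4 * d 2 - b 1 * c 0 * d 3 - b 1 * c 2 * d 5 + b 1 * c 3 * d 0 + b 1 * c 5 * d 2 + b 2 * c 0 * d 4 + b 2 * c 1 * d 5 - b 2 * c 4 * d 0 - b 2 * c 5 * d 1 + b 3 * c 0 * d 1 - b 3 * c 1 * d 0 - b 3 * c 4 * d 5 + b 3 * c 5 * d 4 - b 4 * c 0 * d 2 + b 4 * c 2 * d 0 + b 4 * c 3 * d 5 - b 4 * c 5 * d 3 - b 5 * c 1 * d 2 + b 5 * c 2 * d 1 - b 5 * c 3 * d 4 + b 5 * c 4 * d 3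

lemma sphi_expand (a b c d : E7) :
    starphi0 a b c d = a 0 * X0 b c d + a 1 * X1 b c d + a 2 * X2 b c d + a 3 * X3 b c d + a 4 * X4 b c d + a 5 * X5 b c d + a 6 * X6 b c d := by
  simp only [starphi0, quad7_expand, X0, X1, X2, X3, X4, X5, X6]
  ring

set_option maxHeartbeats 4000000 in
lemma normX (b c d : E7) :
    X0 b c d ^ 2 + X1 b c d ^ 2 + X2 b c d ^ 2 + X3 b c d ^ 2 + X4 b c d ^ 2 + X5 b c d ^ 2 + X6 b c d ^ 2 + phi0 b c d ^ 2 =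
      (b 0 * b 0 + b 1 * b 1 + b 2 * b 2 + b 3 * b 3 + b 4 * b 4 + b 5 * b 5 + b 6 * b 6) * (c 0 * c 0 + c 1 * c 1 + c 2 * c 2 + c 3 * c 3 + c 4 * c 4 + c 5 * c 5 + c 6 * c 6) * (d 0 * d 0 + d 1 * d 1 + d 2 * d 2 + d 3 * d 3 + d 4 * d 4 + d 5 * d 5 + d 6 * d 6) + 2 * (b 0 * c 0 + b 1 * c 1 + b 2 * c 2 + b 3 * c 3 + b 4 * c 4 + b 5 * c 5 + b 6 * c 6) * (c 0 * d 0 + c 1 * d 1 + c 2 * d 2 + c 3 * d 3 + c 4 * d 4 + c 5 * d 5 + c 6 * d 6) * (b 0 * d 0 + b 1 * d 1 + b 2 * d 2 + b 3 * d 3 + b 4 * d 4 + b 5 * d 5 + b 6 * d 6) - (b 0 * b 0 + b 1 * b 1 + b 2 * b 2 + b 3 * b 3 + b 4 * b 4 + b 5 * b 5 + b 6 * b 6) * (c 0 * d 0 + c 1 * d 1 + c 2 * d 2 + c 3 * d 3 + c 4 * d 4 + c 5 * d 5 + c 6 * d 6)^2 - (c 0 * c 0 + c 1 * c 1 + c 2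 * c 2 + c 3 * c 3 + c 4 * c 4 + c 5 * c 5 + c 6 * c 6) * (b 0 * d 0 + b 1 * d 1 + b 2 * d 2 + b 3 * d 3 + b 4 * d 4 + b 5 * d 5 + b 6 * d 6)^2 - (d 0 * d 0 + d 1 * d 1 + d 2 * d 2 + d 3 * d 3 + d 4 * d 4 + d 5 * d 5 + d 6 * d 6) * (b 0 * c 0 + b 1 * c 1 + b 2 * c 2 + b 3 * c 3 + b 4 * c 4 + b 5 * c 5 + b 6 * c 6)^2 := by
  simp only [phi0, tri7_expand, X0, X1, X2, X3, X4, X5, X6]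
  ring
lemma dot7_eq_inner (x y : E7) :
    x 0 * y 0 + x 1 * y 1 + x 2 * y 2 + x 3 * y 3 + x 4 * y 4 + x 5 * y 5 + x 6 * y 6
      = ⟪x, y⟫ := by
  simp [PiLp.inner_apply, RCLike.inner_apply, Fin.sum_univ_seven]
  ring

set_option maxHeartbeats 1000000 in
lemma calib_bound (a b c d : E7)
    (haa : a 0 * a 0 + a 1 * a 1 + a 2 * a 2 + a 3 * a 3 + a 4 * a 4 + a 5 * a 5 + a 6 * a 6 = 1)
    (hbb : b 0 * b 0 + b 1 * b 1 + b 2 * b 2 + b 3 * b 3 + b 4 * b 4 + b 5 * b 5 + b 6 * b 6 = 1)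
    (hcc : c 0 * c 0 + c 1 * c 1 + c 2 * c 2 + c 3 * c 3 + c 4 * c 4 + c 5 * c 5 + c 6 * c 6 = 1)
    (hdd : d 0 * d 0 + d 1 * d 1 + d 2 * d 2 + d 3 * d 3 + d 4 * d 4 + d 5 * d 5 + d 6 * d 6 = 1)
    (hbc : b 0 * c 0 + b 1 * c 1 + b 2 * c 2 + b 3 * c 3 + b 4 * c 4 + b 5 * c 5 + b 6 * c 6 = 0)
    (hbd : b 0 * d 0 + b 1 * d 1 + b 2 * d 2 + b 3 * d 3 + b 4 * d 4 + b 5 * d 5 + b 6 * d 6 = 0)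
    (hcd : c 0 * d 0 + c 1 * d 1 + c 2 * d 2 + c 3 * d 3 + c 4 * d 4 + c 5 * d 5 + c 6 * d 6 = 0) :
    starphi0 a b c d ≤ 1 := by
  have hX : X0 b c d ^ 2 + X1 b c d ^ 2 + X2 b c d ^ 2 + X3 b c d ^ 2 + X4 b c d ^ 2
      + X5 b c d ^ 2 + X6 b c d ^ 2 = 1 - phi0 b c d ^ 2 := by
    have h := normX b c d
    rw [hbb, hcc, hdd, hbc, hbd, hcd] at h
    norm_num at h
    linarith
  have CS := Finset.sum_mul_sq_le_sq_mul_sq Finset.univ (fun i => a i)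
      ![X0 b c d, X1 b c d, X2 b c d, X3 b c d, X4 b c d, X5 b c d, X6 b c d]
  rw [Fin.sum_univ_seven, Fin.sum_univ_seven, Fin.sum_univ_seven] at CS
  simp only [Matrix.cons_val_zero, Matrix.cons_val_one, Matrix.head_cons,
    Matrix.cons_val_two, Matrix.tail_cons, Matrix.cons_val_three, Matrix.cons_val_four,
    show (![X0 b c d, X1 b c d, X2 b c d, X3 b c d, X4 b c d, X5 b c d, X6 b c d] :
      Fin 7 → ℝ) 5 = X5 b c d from rfl,
    show (![X0 b c d, X1 b c d, X2 b c d, X3 b c d, X4 b c d, X5 b c d, X6 b c d] :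
      Fin 7 → ℝ) 6 = X6 b c d from rfl] at CS
  rw [← sphi_expand] at CS
  have hs2 : starphi0 a b c d ^ 2 ≤ 1 - phi0 b c d ^ 2 := by
    calc starphi0 a b c d ^ 2 ≤ _ := CS
    _ = 1 - phi0 b c d ^ 2 := by
      have ha2 : a 0 ^ 2 + a 1 ^ 2 + a 2 ^ 2 + a 3 ^ 2 + a 4 ^ 2 + a 5 ^ 2 + a 6 ^ 2 = 1 := by
        linear_combination haa
      rw [hX, ha2, one_mul]
  nlinarith [sq_nonneg (phi0 b c d)]

theorem starphi0_is_calibration :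
    (∀ v₁ v₂ v₃ v₄ : E7, Orthonormal ℝ ![v₁, v₂, v₃, v₄] → starphi0 v₁ v₂ v₃ v₄ ≤ 1) ∧
    Orthonormal ℝ
      ![(EuclideanSpace.single 3 1 : E7), EuclideanSpace.single 4 1,
        EuclideanSpace.single 5 1, EuclideanSpace.single 6 1] ∧
    starphi0 (EuclideanSpace.single 3 1) (EuclideanSpace.single 4 1)
      (EuclideanSpace.single 5 1) (EuclideanSpace.single 6 1) = 1 := by
  refine ⟨?_, ?_, ?_⟩
  · intro v₁ v₂ v₃ v₄ h
    rw [orthonormal_iff_ite] at h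
    have g : ∀ i j : Fin 4, ⟪![v₁, v₂, v₃, v₄] i, ![v₁, v₂, v₃, v₄] j⟫ =
        if i = j then (1:ℝ) else 0 := h
    have h11 := g 0 0; have h22 := g 1 1; have h33 := g 2 2; have h44 := g 3 3
    have h23 := g 1 2; have h24 := g 1 3; have h34 := g 2 3
    simp only [Matrix.cons_val_zero, Matrix.cons_val_one, Matrix.head_cons,
      Matrix.cons_val_two, Matrix.tail_cons, Matrix.cons_val_three] at h11 h22 h33 h44 h23 h24 h34
    rw [if_true] at h11 h22 h33 h44
    apply calib_bound <;> rw [dot7_eq_inner] <;> assumption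
  · rw [orthonormal_iff_ite]
    intro i j
    fin_cases i <;> fin_cases j <;>
      simp [EuclideanSpace.inner_single_left, EuclideanSpace.single_apply]
  · simp (config := { decide := true }) only [starphi0, quad7_expand,
      EuclideanSpace.single_apply]
    norm_num
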